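/- Let D_s and D_u be pseudometrics on ℝ², let λ > 1, and let F : ℝ² → ℝ² be a homeomorphism such that D_s(F⁻¹(ξ),F⁻¹(η)) = λ·D_s(ξ,η) and D_u(F(ξ),F(η)) = λ·D_u(ξ,η) for all ξ,η ∈ ℝ². Assume D = D_s + D_u is a metric on ℝ² inducing the Euclidean topology which is proper, i.e. for some (hence every) x₀, D(x₀,x) → ∞ as ‖x‖ → ∞. Let H : ℝ² → ℝ² be a homeomorphism, set f = H⁻¹ ∘ F ∘ H, and define L(p,q) = D(H(p),H(q)). Then L is a metric on ℝ² inducing the Euclidean topology, its second difference Δ²L(p,q) = L(f²(p),f²(q)) − 2·L(f(p),f(q)) + L(p,q) is strictly positive for p ≠ q, and L satisfies condition HP with respect to f: for every compact set C ⊆ ℝ² and every ε > 0 there exists R > 0 such that for all p with ‖p‖ > R and all q, r ∈ C, |ΔL(p,q) − ΔL(p,r)| < ε·Δ²L(p,q), where ΔL(p,q) = L(f(p),f(q)) − L(p,q). -/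

import Mathlib

/-!
Through `H`, the differences of `L` along `f` are the differences of `D = Ds + Du` along `F`.
One step of `F` turns `(Ds, Du)` into `(Ds / λ, λ Du)`, so `ΔD = (λ⁻¹ - 1) Ds + (λ - 1) Du` and
`Δ²D = (1 - λ⁻¹)² Ds + (λ - 1)² Du ≥ (1 - λ⁻¹)² D`. Hence `Δ²L(p, q)` grows like `L(p, q)`, which
tends to infinity with `p` since `D` is proper, while by the triangle inequality
`|ΔL(p, q) - ΔL(p, r)| ≤ (λ - 1) L(q, r)` stays bounded for `q, r` in a compact set.
-/

open Filter

def IsPseudometric (p : ℝ × ℝ → ℝ × ℝ → ℝ) : Prop :=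
  (∀ x y, 0 ≤ p x y) ∧ (∀ x y, p x y = p y x) ∧ (∀ x, p x x = 0) ∧
  (∀ x y z, p x z ≤ p x y + p y z)

namespace IsPseudometric

variable {d d' : ℝ × ℝ → ℝ × ℝ → ℝ}

theorem add (hd : IsPseudometric d) (hd' : IsPseudometric d') :
    IsPseudometric fun x y => d x y + d' x y :=
  ⟨fun x y => add_nonneg (hd.1 x y) (hd'.1 x y),
    fun x y => by simp only [hd.2.1 x y, hd'.2.1 x y],
    fun x => by simp only [hd.2.2.1, hd'.2.2.1, add_zero],
    fun x y z => by linarith [hd.2.2.2 x y z, hd'.2.2.2 x y z]⟩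

theorem comp (hd : IsPseudometric d) (g : ℝ × ℝ → ℝ × ℝ) :
    IsPseudometric fun x y => d (g x) (g y) :=
  ⟨fun _ _ => hd.1 _ _, fun _ _ => hd.2.1 _ _, fun _ => hd.2.2.1 _, fun _ _ _ => hd.2.2.2 _ _ _⟩

theorem abs_sub_le (hd : IsPseudometric d) (x y z : ℝ × ℝ) : |d x y - d x z| ≤ d y z := by
  rw [abs_sub_le_iff]
  constructor
  · linarith [hd.2.2.2 x z y, hd.2.1 z y]
  · linarith [hd.2.2.2 x y z]

theorem continuous_apply (hd : IsPseudometric d)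
    (hsmall : ∀ x : ℝ × ℝ, ∀ ε > 0, ∃ δ > 0, ∀ y, dist x y < δ → d x y < ε) (x₀ : ℝ × ℝ) :
    Continuous (d x₀) := by
  refine Metric.continuous_iff.2 fun x ε hε => ?_
  obtain ⟨δ, hδ, hxy⟩ := hsmall x ε hε
  refine ⟨δ, hδ, fun y hy => ?_⟩
  have := hd.abs_sub_le x₀ y x
  rw [hd.2.1 y x] at this
  exact this.trans_lt (hxy y (by rwa [dist_comm]))

end IsPseudometric

theorem forall_lt_of_dist_lt_comp {X Y : Type*} [PseudoMetricSpace X] [PseudoMetricSpace Y]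
    {d : Y → Y → ℝ} {g : X → Y} (hg : Continuous g)
    (hd : ∀ y : Y, ∀ ε > 0, ∃ δ > 0, ∀ y', dist y y' < δ → d y y' < ε) :
    ∀ x : X, ∀ ε > 0, ∃ δ > 0, ∀ x', dist x x' < δ → d (g x) (g x') < ε := by
  intro x ε hε
  obtain ⟨δ₁, hδ₁, hd₁⟩ := hd (g x) ε hε
  obtain ⟨δ, hδ, hg₁⟩ := Metric.continuous_iff.1 hg x δ₁ hδ₁
  refine ⟨δ, hδ, fun x' hx' => hd₁ _ ?_⟩
  rw [dist_comm] at hx' ⊢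
  exact hg₁ x' hx'

theorem forall_dist_lt_of_lt_comp {X Y : Type*} [PseudoMetricSpace X] [PseudoMetricSpace Y]
    {d : Y → Y → ℝ} (g : X ≃ₜ Y)
    (hd : ∀ y : Y, ∀ ε > 0, ∃ δ > 0, ∀ y', d y y' < δ → dist y y' < ε) :
    ∀ x : X, ∀ ε > 0, ∃ δ > 0, ∀ x', d (g x) (g x') < δ → dist x x' < ε := by
  intro x ε hε
  obtain ⟨δ₁, hδ₁, hg₁⟩ := Metric.continuous_iff.1 g.symm.continuous (g x) ε hε
  obtain ⟨δ, hδ, hd₁⟩ := hd (g x) δ₁ hδ₁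
  refine ⟨δ, hδ, fun x' hx' => ?_⟩
  have := hg₁ (g x') (by rw [dist_comm]; exact hd₁ _ hx')
  rwa [g.symm_apply_apply, g.symm_apply_apply, dist_comm] at this

section Cocompact

variable {E : Type*} [NormedAddCommGroup E] [ProperSpace E]

theorem tendsto_cocompact_atTop_of_norm {g : E → ℝ}
    (h : ∀ M : ℝ, ∃ R : ℝ, ∀ x : E, R < ‖x‖ → M < g x) : Tendsto g (cocompact E) atTop := by
  rw [← Metric.cobounded_eq_cocompact]
  refine tendsto_atTop.2 fun M => ?_
  obtain ⟨R, hR⟩ := h M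
  filter_upwards [eventually_cobounded_le_norm (R + 1)] with x hx
  exact (hR x (by linarith)).le

theorem exists_pos_forall_lt_norm_of_eventually {P : E → Prop} (h : ∀ᶠ x in cocompact E, P x) :
    ∃ R > 0, ∀ x : E, R < ‖x‖ → P x := by
  rw [← Metric.cobounded_eq_cocompact] at h
  obtain ⟨a, -, ha⟩ := hasBasis_cobounded_norm.eventually_iff.1 h
  exact ⟨max a 1, by positivity, fun x hx => ha (le_max_left a 1 |>.trans hx.le)⟩

end Cocompact

section Differences

variable {X : Type*}

def firstDiff (f : X → X) (L : X → X → ℝ) (p q : X) : ℝ :=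
  L (f p) (f q) - L p q

def secondDiff (f : X → X) (L : X → X → ℝ) (p q : X) : ℝ :=
  L (f (f p)) (f (f q)) - 2 * L (f p) (f q) + L p q

def SatisfiesHP (f : ℝ × ℝ → ℝ × ℝ) (L : ℝ × ℝ → ℝ × ℝ → ℝ) : Prop :=
  ∀ C : Set (ℝ × ℝ), IsCompact C → ∀ ε > 0, ∃ R > 0, ∀ p : ℝ × ℝ, R < ‖p‖ →
    ∀ q ∈ C, ∀ r ∈ C, |firstDiff f L p q - firstDiff f L p r| < ε * secondDiff f L p q

variable {Y : Type*} {f : X → X} {F : Y → Y} {H : X → Y} {L : X → X → ℝ} {D : Y → Y → ℝ}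

theorem firstDiff_eq_of_semiconj (hH : Function.Semiconj H f F)
    (hL : ∀ p q, L p q = D (H p) (H q)) (p q : X) :
    firstDiff f L p q = firstDiff F D (H p) (H q) := by
  simp only [firstDiff, hL, hH.eq]

theorem secondDiff_eq_of_semiconj (hH : Function.Semiconj H f F)
    (hL : ∀ p q, L p q = D (H p) (H q)) (p q : X) :
    secondDiff f L p q = secondDiff F D (H p) (H q) := by
  simp only [secondDiff, hL, hH.eq]

end Differences

theorem satisfiesHP_of_bounds {f : ℝ × ℝ → ℝ × ℝ} {L : ℝ × ℝ → ℝ × ℝ → ℝ}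
    (hL : IsPseudometric L) (hcont : Continuous (L 0))
    (hproper : Tendsto (L 0) (cocompact (ℝ × ℝ)) atTop) {κ c : ℝ} (hκ : 0 ≤ κ) (hc : 0 < c)
    (hΔ₁ : ∀ p q r, |firstDiff f L p q - firstDiff f L p r| ≤ κ * L q r)
    (hΔ₂ : ∀ p q, c * L p q ≤ secondDiff f L p q) : SatisfiesHP f L := by
  intro C hC ε hε
  obtain ⟨B, hB⟩ := hC.bddAbove_image hcont.continuousOn
  have hB' : ∀ q ∈ C, L 0 q ≤ B := fun q hq => hB ⟨q, hq, rfl⟩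
  have hdiam : ∀ q ∈ C, ∀ r ∈ C, L q r ≤ 2 * B := fun q hq r hr => by
    linarith [hL.2.2.2 q 0 r, hL.2.1 q 0, hB' q hq, hB' r hr]
  have hεc : 0 < ε * c := mul_pos hε hc
  refine exists_pos_forall_lt_norm_of_eventually ?_
  filter_upwards [hproper.eventually_gt_atTop (B + κ * (2 * B) / (ε * c))] with p hp q hq r hr
  have hpq : κ * (2 * B) / (ε * c) < L p q := by
    linarith [hL.2.2.2 0 q p, hL.2.1 q p, hB' q hq]
  calc |firstDiff f L p q - firstDiff f L p r|
      ≤ κ * (2 * B) := (hΔ₁ p q r).trans (mul_le_mul_of_nonneg_left (hdiam q hq r hr) hκ)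
    _ < ε * (c * L p q) := by rw [div_lt_iff₀ hεc] at hpq; linarith
    _ ≤ ε * secondDiff f L p q := mul_le_mul_of_nonneg_left (hΔ₂ p q) hε.le

theorem one_sub_inv_le_sub_one {l : ℝ} (hl : 1 ≤ l) : 1 - l⁻¹ ≤ l - 1 :=
  calc 1 - l⁻¹ = (l - 1) * l⁻¹ := by field_simp
    _ ≤ l - 1 := mul_le_of_le_one_right (by linarith) (inv_le_one_of_one_le₀ hl)

theorem map_eq_inv_mul_of_symm {X : Type*} [TopologicalSpace X] {d : X → X → ℝ} {l : ℝ}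
    (F : X ≃ₜ X) (hl : l ≠ 0) (h : ∀ ξ η, d (F.symm ξ) (F.symm η) = l * d ξ η) (ξ η : X) :
    d (F ξ) (F η) = l⁻¹ * d ξ η := by
  rw [eq_inv_mul_iff_mul_eq₀ hl, ← h, F.symm_apply_apply, F.symm_apply_apply]

section Splitting

variable {Ds Du D : ℝ × ℝ → ℝ × ℝ → ℝ} {F : ℝ × ℝ → ℝ × ℝ} {l : ℝ}

theorem firstDiff_eq_of_split (hD : ∀ x y, D x y = Ds x y + Du x y)
    (hs : ∀ ξ η, Ds (F ξ) (F η) = l⁻¹ * Ds ξ η) (hu : ∀ ξ η, Du (F ξ) (F η) = l * Du ξ η)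
    (ξ η : ℝ × ℝ) : firstDiff F D ξ η = (l⁻¹ - 1) * Ds ξ η + (l - 1) * Du ξ η := by
  simp only [firstDiff, hD, hs, hu]
  ring

theorem secondDiff_eq_of_split (hD : ∀ x y, D x y = Ds x y + Du x y)
    (hs : ∀ ξ η, Ds (F ξ) (F η) = l⁻¹ * Ds ξ η) (hu : ∀ ξ η, Du (F ξ) (F η) = l * Du ξ η)
    (hl : l ≠ 0) (ξ η : ℝ × ℝ) :
    secondDiff F D ξ η = (1 - l⁻¹) ^ 2 * Ds ξ η + (l - 1) ^ 2 * Du ξ η := by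
  simp only [secondDiff, hD, hs, hu]
  field_simp
  ring

theorem abs_firstDiff_sub_le_of_split (hDs : IsPseudometric Ds) (hDu : IsPseudometric Du)
    (hD : ∀ x y, D x y = Ds x y + Du x y)
    (hs : ∀ ξ η, Ds (F ξ) (F η) = l⁻¹ * Ds ξ η) (hu : ∀ ξ η, Du (F ξ) (F η) = l * Du ξ η)
    (hl : 1 ≤ l) (ξ η ζ : ℝ × ℝ) :
    |firstDiff F D ξ η - firstDiff F D ξ ζ| ≤ (l - 1) * D η ζ := by
  have hs_coef : |l⁻¹ - 1| ≤ l - 1 := by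
    rw [abs_sub_comm, abs_of_nonneg (sub_nonneg.2 (inv_le_one_of_one_le₀ hl))]
    exact one_sub_inv_le_sub_one hl
  have hu_coef : |l - 1| ≤ l - 1 := (abs_of_nonneg (by linarith)).le
  rw [firstDiff_eq_of_split hD hs hu, firstDiff_eq_of_split hD hs hu, hD]
  calc |(l⁻¹ - 1) * Ds ξ η + (l - 1) * Du ξ η - ((l⁻¹ - 1) * Ds ξ ζ + (l - 1) * Du ξ ζ)|
      = |(l⁻¹ - 1) * (Ds ξ η - Ds ξ ζ) + (l - 1) * (Du ξ η - Du ξ ζ)| := by ring_nf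
    _ ≤ |l⁻¹ - 1| * |Ds ξ η - Ds ξ ζ| + |l - 1| * |Du ξ η - Du ξ ζ| := by
      rw [← abs_mul, ← abs_mul]
      exact abs_add_le _ _
    _ ≤ (l - 1) * Ds η ζ + (l - 1) * Du η ζ := by
      gcongr
      · exact hDs.abs_sub_le ξ η ζ
      · exact hDu.abs_sub_le ξ η ζ
    _ = (l - 1) * (Ds η ζ + Du η ζ) := by ring

theorem mul_le_secondDiff_of_split (hDu : IsPseudometric Du)
    (hD : ∀ x y, D x y = Ds x y + Du x y)
    (hs : ∀ ξ η, Ds (F ξ) (F η) = l⁻¹ * Ds ξ η) (hu : ∀ ξ η, Du (F ξ) (F η) = l * Du ξ η)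
    (hl : 1 ≤ l) (ξ η : ℝ × ℝ) :
    (1 - l⁻¹) ^ 2 * D ξ η ≤ secondDiff F D ξ η := by
  have h₀ : 0 ≤ 1 - l⁻¹ := sub_nonneg.2 (inv_le_one_of_one_le₀ hl)
  rw [secondDiff_eq_of_split hD hs hu (by positivity), hD, mul_add]
  gcongr (1 - l⁻¹) ^ 2 * Ds ξ η + ?_
  exact mul_le_mul_of_nonneg_right (pow_le_pow_left₀ h₀ (one_sub_inv_le_sub_one hl) 2) (hDu.1 ξ η)

end Splitting

theorem conjugated_lift_satisfies_HP
    (Ds Du : ℝ × ℝ → ℝ × ℝ → ℝ) (l : ℝ) (hl : 1 < l)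
    (F : ℝ × ℝ ≃ₜ ℝ × ℝ)
    (hDs : IsPseudometric Ds) (hDu : IsPseudometric Du)
    (hs : ∀ ξ η : ℝ × ℝ, Ds (F.symm ξ) (F.symm η) = l * Ds ξ η)
    (hu : ∀ ξ η : ℝ × ℝ, Du (F ξ) (F η) = l * Du ξ η)
    (D : ℝ × ℝ → ℝ × ℝ → ℝ) (hD : ∀ x y, D x y = Ds x y + Du x y)
    -- `D` is a metric inducing the Euclidean topology:
    (hDpos : ∀ x y, D x y = 0 ↔ x = y)
    (hDtop₁ : ∀ x : ℝ × ℝ, ∀ ε > 0, ∃ δ > 0, ∀ y, dist x y < δ → D x y < ε)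
    (hDtop₂ : ∀ x : ℝ × ℝ, ∀ ε > 0, ∃ δ > 0, ∀ y, D x y < δ → dist x y < ε)
    -- `D` is proper:
    (hDproper : ∀ x₀ : ℝ × ℝ, ∀ M : ℝ, ∃ R : ℝ, ∀ x : ℝ × ℝ, R < ‖x‖ → M < D x₀ x)
    (H : ℝ × ℝ ≃ₜ ℝ × ℝ)
    (f : ℝ × ℝ → ℝ × ℝ) (hf : ∀ z, f z = H.symm (F (H z)))
    (L : ℝ × ℝ → ℝ × ℝ → ℝ) (hL : ∀ p q, L p q = D (H p) (H q)) :
    -- `L` is a metric on ℝ²: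
    ((∀ p q, 0 ≤ L p q) ∧ (∀ p q, L p q = L q p) ∧ (∀ p q, L p q = 0 ↔ p = q) ∧
      (∀ p q r, L p r ≤ L p q + L q r)) ∧
    -- `L` induces the Euclidean topology:
    ((∀ p : ℝ × ℝ, ∀ ε > 0, ∃ δ > 0, ∀ q, dist p q < δ → L p q < ε) ∧
      (∀ p : ℝ × ℝ, ∀ ε > 0, ∃ δ > 0, ∀ q, L p q < δ → dist p q < ε)) ∧
    -- the second difference of `L` is strictly positive off the diagonal:
    (∀ p q : ℝ × ℝ, p ≠ q →
      0 < L (f (f p)) (f (f q)) - 2 * L (f p) (f q) + L p q) ∧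
    -- condition HP for `L` with respect to `f`:
    (∀ C : Set (ℝ × ℝ), IsCompact C → ∀ ε > 0, ∃ R > 0, ∀ p : ℝ × ℝ, R < ‖p‖ →
      ∀ q ∈ C, ∀ r ∈ C,
        |(L (f p) (f q) - L p q) - (L (f p) (f r) - L p r)| <
          ε * (L (f (f p)) (f (f q)) - 2 * L (f p) (f q) + L p q)) := by
  have hl₀ : l ≠ 0 := by positivity
  have hHf : Function.Semiconj H f F := fun p => by rw [hf, H.apply_symm_apply]
  have hsF := map_eq_inv_mul_of_symm F hl₀ hs
  have hLpm : IsPseudometric L := by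
    rw [funext₂ hL, funext₂ hD]
    exact (hDs.add hDu).comp H
  have hLzero : ∀ p q, L p q = 0 ↔ p = q := fun p q => by rw [hL, hDpos, H.injective.eq_iff]
  have hsmall : ∀ p : ℝ × ℝ, ∀ ε > 0, ∃ δ > 0, ∀ q, dist p q < δ → L p q < ε := by
    simpa only [hL] using forall_lt_of_dist_lt_comp H.continuous hDtop₁
  have hproper : Tendsto (L 0) (cocompact (ℝ × ℝ)) atTop := by
    rw [funext₂ hL]
    exact (tendsto_cocompact_atTop_of_norm (hDproper (H 0))).comp H.map_cocompact.le
  have hΔ₁ : ∀ p q r, |firstDiff f L p q - firstDiff f L p r| ≤ (l - 1) * L q r := fun p q r => by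
    rw [firstDiff_eq_of_semiconj hHf hL, firstDiff_eq_of_semiconj hHf hL, hL]
    exact abs_firstDiff_sub_le_of_split hDs hDu hD hsF hu hl.le _ _ _
  have hΔ₂ : ∀ p q, (1 - l⁻¹) ^ 2 * L p q ≤ secondDiff f L p q := fun p q => by
    rw [secondDiff_eq_of_semiconj hHf hL, hL]
    exact mul_le_secondDiff_of_split hDu hD hsF hu hl.le _ _
  have hc : 0 < (1 - l⁻¹) ^ 2 := pow_pos (sub_pos.2 (inv_lt_one_of_one_lt₀ hl)) 2
  refine ⟨⟨hLpm.1, hLpm.2.1, hLzero, hLpm.2.2.2⟩,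
    ⟨hsmall, by simpa only [hL] using forall_dist_lt_of_lt_comp H hDtop₂⟩,
    fun p q hpq => ?_,
    satisfiesHP_of_bounds hLpm (hLpm.continuous_apply hsmall 0) hproper (by linarith) hc hΔ₁ hΔ₂⟩
  exact (mul_pos hc ((hLpm.1 p q).lt_of_ne fun h => hpq ((hLzero p q).1 h.symm))).trans_le
    (hΔ₂ p q)
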